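/- arXiv:2509.09394 — 5 statements merged into one kernel-verified Lean document; each statement's English description precedes it below -/
import Mathlib

section
/- Let N, n, m, q be natural numbers with n = m + q, q ≥ 1 and N > 2n − m. Let y ∈ ℝ^N, c ∈ ℝ^{m+1}, e ∈ ℝ^{q+1}, and let b ∈ ℝ^{q+1} satisfy ⟨b, e⟩ = 1. Set a = c ⋆ b ∈ ℝ^{n+1}. Suppose g ∈ ℝ^{N−2n+m} satisfies T_{N−n}(a) y = T_{N−n}(a) T_{N−n}(a)ᵀ T_{N−2n+m}(b)ᵀ g. Define λ = T_{N−2n+m}(b)ᵀ g ∈ ℝ^{N−n} and ŷ = y − T_{N−n}(a)ᵀ λ ∈ ℝ^N. Then (b, ŷ, λ) together with multiplier μ = 0 satisfies all four first-order optimality conditions of the fixed pole least squares realization problem: (i) H_q(ŷ)ᵀ T_{N−n}(c)ᵀ λ = 0, (ii) ŷ − y + T_{N−n}(a)ᵀ λ = 0, (iii) T_{N−n}(c) H_q(ŷ) b = 0, and (iv) ⟨b, e⟩ = 1. In other words, every real solution (b, g) of the multiparameter eigenvalue system with the chosen normalization yields a critical point of the constrained estimation problem. -/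
open Matrix Finset

/-- Banded Toeplitz matrix `T_k(a)` of a coefficient vector `a = (a_n, …, a_1, a_0)`:
entry `(i,j)` equals the coefficient `a_{n-(j-i)}` (vector component `j - i`, since
component `t` of the vector is the coefficient `a_{n-t}`) when `0 ≤ j - i ≤ n`, else `0`.
The number of columns is passed explicitly (intended: `N = k + n`). -/
def toep {R : Type*} [Semiring R] (k N n : ℕ) (a : Fin (n + 1) → R) :
    Matrix (Fin k) (Fin N) R :=
  Matrix.of fun i j =>
    if h : i.val ≤ j.val ∧ j.val - i.val ≤ n then a ⟨j.val - i.val, by omega⟩ else 0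

/-- Hankel matrix `H_q(y) ∈ R^{(N-q) × (q+1)}` with entries `(H_q(y))_{i,j} = y_{i+j}` (0-based). -/
def hank {R : Type*} [Semiring R] (N q : ℕ) (y : Fin N → R) :
    Matrix (Fin (N - q)) (Fin (q + 1)) R :=
  Matrix.of fun i j => y ⟨i.val + j.val, by have hi := i.isLt; have hj := j.isLt; omega⟩

/-- Convolution of coefficient vectors: `(c ⋆ b)_k = Σ_{i+j=k} c_i b_j`. -/
def convVec {R : Type*} [Semiring R] (m q : ℕ) (c : Fin (m + 1) → R) (b : Fin (q + 1) → R) :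
    Fin (m + q + 1) → R :=
  fun k => ∑ i : Fin (m + 1), ∑ j : Fin (q + 1), if i.val + j.val = k.val then c i * b j else 0

/-- zero-padded extension of a finite vector to ℕ -/
def pad {K : ℕ} (v : Fin K → ℝ) : ℕ → ℝ := fun t => if h : t < K then v ⟨t, h⟩ else 0

lemma pad_lt {K : ℕ} (v : Fin K → ℝ) {t : ℕ} (h : t < K) : pad v t = v ⟨t, h⟩ := dif_pos h

lemma pad_ge {K : ℕ} (v : Fin K → ℝ) {t : ℕ} (h : K ≤ t) : pad v t = 0 := dif_neg (by omega)

lemma pad_fin {K : ℕ} (v : Fin K → ℝ) (i : Fin K) : pad v i.val = v i := by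
  rw [pad_lt v i.isLt]

/-- power series attached to a vector -/
noncomputable def PS {K : ℕ} (v : Fin K → ℝ) : PowerSeries ℝ := PowerSeries.mk (pad v)

lemma coeff_PS {K : ℕ} (v : Fin K → ℝ) (j : ℕ) :
    PowerSeries.coeff j (PS v) = pad v j := PowerSeries.coeff_mk j _

lemma toep_apply (k K n : ℕ) (a : Fin (n+1) → ℝ) (i : Fin k) (j : Fin K) :
    toep k K n a i j = if i.val ≤ j.val then pad a (j.val - i.val) else 0 := by
  unfold toep pad
  dsimp only [Matrix.of_apply]
  split_ifs <;> first | rfl | omega | (exfalso; omega)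

lemma sum_range_congr_zero {M M' : ℕ} (f : ℕ → ℝ)
    (hM : ∀ u, M ≤ u → f u = 0) (hM' : ∀ u, M' ≤ u → f u = 0) :
    ∑ u ∈ range M, f u = ∑ u ∈ range M', f u := by
  rw [Finset.sum_subset (Finset.range_subset_range.2 (le_max_left M M'))
    (fun x _ hx => hM x (by simpa using hx)),
    Finset.sum_subset (Finset.range_subset_range.2 (le_max_right M M'))
    (fun x _ hx => hM' x (by simpa using hx))]

lemma mySumCollapse {M : ℕ} (j : ℕ) (f : ℕ → ℝ) (hf : ∀ u, M ≤ u → f u = 0) :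
    ∑ s ∈ range M, (if s = j then f s else 0) = f j := by
  rw [Finset.sum_ite_eq' (range M) j f]
  split_ifs with h
  · rfl
  · exact (hf j (by simpa using h)).symm

/-- antidiagonal sum as a guarded double sum over ranges -/
lemma antidiagonal_eq_double (F : ℕ → ℕ → ℝ) (Mf Mg : ℕ)
    (hf : ∀ s t, Mf ≤ s → F s t = 0) (hg : ∀ s t, Mg ≤ t → F s t = 0) (j : ℕ) :
    ∑ p ∈ Finset.HasAntidiagonal.antidiagonal j, F p.1 p.2
      = ∑ s ∈ range Mf, ∑ t ∈ range Mg, if s + t = j then F s t else 0 := by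
  rw [Finset.Nat.sum_antidiagonal_eq_sum_range_succ_mk (fun p => F p.1 p.2) j]
  have step1 : ∀ s ∈ range (j+1), F s (j - s) = ∑ t ∈ range Mg, if s + t = j then F s t else 0 := by
    intro s hs
    rw [Finset.mem_range] at hs
    have : ∀ t ∈ range Mg, (if s + t = j then F s t else 0) = (if t = j - s then F s t else 0) := by
      intro t _
      congr 1
      simp only [eq_iff_iff]
      omega
    rw [Finset.sum_congr rfl this, mySumCollapse (j - s) (fun t => F s t) (fun t ht => hg s t ht)]
  rw [Finset.sum_congr rfl step1]
  apply sum_range_congr_zero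
  · intro s hsj
    apply Finset.sum_eq_zero
    intro t _
    have : ¬ (s + t = j) := by omega
    simp [this]
  · intro s hsM
    apply Finset.sum_eq_zero
    intro t _
    split_ifs
    · exact hf s t hsM
    · rfl

lemma toep_mulVec (k K n : ℕ) (a : Fin (n+1) → ℝ) (y : Fin K → ℝ) (i : Fin k) :
    (toep k K n a *ᵥ y) i = ∑ u ∈ range (n+1), pad a u * pad y (i.val + u) := by
  have step0 : (toep k K n a *ᵥ y) i
      = ∑ j ∈ range K, (if i.val ≤ j then pad a (j - i.val) else 0) * pad y j := by
    rw [Matrix.mulVec, dotProduct,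
      ← Fin.sum_univ_eq_sum_range (fun j => (if i.val ≤ j then pad a (j - i.val) else 0) * pad y j) K]
    exact Finset.sum_congr rfl fun j _ => by rw [toep_apply, pad_fin]
  have step1 : ∀ j ∈ range K, (if i.val ≤ j then pad a (j - i.val) else 0) * pad y j
      = ∑ u ∈ range (n+1), (if i.val + u = j then pad a u else 0) * pad y j := by
    intro j _
    rw [← Finset.sum_mul]
    congr 1
    by_cases hij : i.val ≤ j
    · have : ∀ u ∈ range (n+1), (if i.val + u = j then pad a u else 0)
          = (if u = j - i.val then pad a u else 0) := by
        intro u _; congr 1; simp only [eq_iff_iff]; omega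
      rw [Finset.sum_congr rfl this, mySumCollapse (j - i.val) (pad a) (fun u hu => pad_ge a hu),
        if_pos hij]
    · rw [if_neg hij]
      symm
      apply Finset.sum_eq_zero
      intro u _
      rw [if_neg (by omega)]
  rw [step0, Finset.sum_congr rfl step1, Finset.sum_comm]
  apply Finset.sum_congr rfl
  intro u _
  have step2 : ∀ j ∈ range K, (if i.val + u = j then pad a u else 0) * pad y j
      = (if j = i.val + u then pad a u * pad y j else 0) := by
    intro j _
    split_ifs <;> first | rfl | omega | (exfalso; omega) | rw [zero_mul]
  rw [Finset.sum_congr rfl step2,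
    mySumCollapse (i.val + u) (fun j => pad a u * pad y j)
      (fun j hj => by show pad a u * pad y j = 0; rw [pad_ge y hj, mul_zero])]

lemma toepT_mulVec (k K n : ℕ) (a : Fin (n+1) → ℝ) (x : Fin k → ℝ) (j : ℕ)
    (hK : k + n ≤ K) :
    pad ((toep k K n a)ᵀ *ᵥ x) j
      = ∑ t ∈ range k, (if t ≤ j then pad a (j - t) else 0) * pad x t := by
  by_cases hj : j < K
  · rw [pad_lt _ hj]
    rw [Matrix.mulVec, dotProduct,
      ← Fin.sum_univ_eq_sum_range (fun t => (if t ≤ j then pad a (j - t) else 0) * pad x t) k]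
    apply Finset.sum_congr rfl
    intro t _
    rw [Matrix.transpose_apply, toep_apply, pad_fin]
  · rw [pad_ge _ (by omega)]
    symm
    apply Finset.sum_eq_zero
    intro t ht
    rw [Finset.mem_range] at ht
    split_ifs with h
    · rw [pad_ge a (by omega), zero_mul]
    · rw [zero_mul]

lemma sum_shift_collapse {M : ℕ} (j t : ℕ) (f : ℕ → ℝ) (hf : ∀ u, M ≤ u → f u = 0) :
    ∑ s ∈ range M, (if s + t = j then f s else 0) = if t ≤ j then f (j - t) else 0 := by
  by_cases htj : t ≤ j
  · rw [if_pos htj]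
    have key : ∀ s ∈ range M, (if s + t = j then f s else 0) = (if s = j - t then f s else 0) := by
      intro s _; congr 1; simp only [eq_iff_iff]; omega
    rw [Finset.sum_congr rfl key, mySumCollapse (j - t) f hf]
  · rw [if_neg htj]
    apply Finset.sum_eq_zero
    intro s _
    rw [if_neg (by omega)]

lemma PS_toepT (k K n : ℕ) (a : Fin (n+1) → ℝ) (x : Fin k → ℝ) (hK : k + n ≤ K) :
    PS ((toep k K n a)ᵀ *ᵥ x) = PS a * PS x := by
  apply PowerSeries.ext
  intro j
  rw [coeff_PS, PowerSeries.coeff_mul, toepT_mulVec k K n a x j hK]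
  simp only [coeff_PS]
  rw [antidiagonal_eq_double (fun s t => pad a s * pad x t) (n+1) k
    (fun s t hs => by show pad a s * pad x t = 0; rw [pad_ge a hs, zero_mul])
    (fun s t ht => by show pad a s * pad x t = 0; rw [pad_ge x ht, mul_zero]) j]
  rw [Finset.sum_comm]
  apply Finset.sum_congr rfl
  intro t _
  have key : ∀ s ∈ range (n+1), (if s + t = j then pad a s * pad x t else 0)
      = (if s + t = j then pad a s else 0) * pad x t := by
    intro s _
    split_ifs
    · rfl
    · rw [zero_mul]
  rw [Finset.sum_congr rfl key, ← Finset.sum_mul,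
    sum_shift_collapse j t (pad a) (fun u hu => pad_ge a hu)]

lemma pad_convVec (m q : ℕ) (c : Fin (m+1) → ℝ) (b : Fin (q+1) → ℝ) (j : ℕ) :
    pad (convVec m q c b) j
      = ∑ s ∈ range (m+1), ∑ t ∈ range (q+1), if s + t = j then pad c s * pad b t else 0 := by
  by_cases hj : j < m + q + 1
  · rw [pad_lt _ hj]
    show convVec m q c b ⟨j, hj⟩ = _
    unfold convVec
    rw [← Fin.sum_univ_eq_sum_range
      (fun s => ∑ t ∈ range (q+1), if s + t = j then pad c s * pad b t else 0) (m+1)]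
    apply Finset.sum_congr rfl
    intro i _
    rw [← Fin.sum_univ_eq_sum_range (fun t => if i.val + t = j then pad c i.val * pad b t else 0) (q+1)]
    apply Finset.sum_congr rfl
    intro t _
    rw [pad_fin, pad_fin]
  · rw [pad_ge _ (by omega)]
    symm
    apply Finset.sum_eq_zero
    intro s hs
    apply Finset.sum_eq_zero
    intro t ht
    rw [Finset.mem_range] at hs ht
    rw [if_neg (by omega)]

lemma PS_convVec (m q : ℕ) (c : Fin (m+1) → ℝ) (b : Fin (q+1) → ℝ) :
    PS (convVec m q c b) = PS c * PS b := by
  apply PowerSeries.ext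
  intro j
  rw [coeff_PS, PowerSeries.coeff_mul, pad_convVec]
  simp only [coeff_PS]
  rw [antidiagonal_eq_double (fun s t => pad c s * pad b t) (m+1) (q+1)
    (fun s t hs => by show pad c s * pad b t = 0; rw [pad_ge c hs, zero_mul])
    (fun s t ht => by show pad c s * pad b t = 0; rw [pad_ge b ht, mul_zero]) j]

lemma hank_mulVec (N q : ℕ) (y : Fin N → ℝ) (b : Fin (q+1) → ℝ) (i : Fin (N - q)) :
    (hank N q y *ᵥ b) i = ∑ t ∈ range (q+1), pad y (i.val + t) * pad b t := by
  rw [Matrix.mulVec, dotProduct,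
    ← Fin.sum_univ_eq_sum_range (fun t => pad y (i.val + t) * pad b t) (q+1)]
  apply Finset.sum_congr rfl
  intro t _
  rw [pad_fin]
  congr 1
  rw [pad_lt _ (by have := i.isLt; have := t.isLt; omega)]
  rfl

lemma hankT_mulVec (N q : ℕ) (y : Fin N → ℝ) (v : Fin (N - q) → ℝ) (l : Fin (q+1)) :
    ((hank N q y)ᵀ *ᵥ v) l = ∑ i ∈ range (N - q), pad y (i + l.val) * pad v i := by
  rw [Matrix.mulVec, dotProduct,
    ← Fin.sum_univ_eq_sum_range (fun i => pad y (i + l.val) * pad v i) (N - q)]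
  apply Finset.sum_congr rfl
  intro i _
  rw [Matrix.transpose_apply, pad_fin]
  congr 1
  rw [pad_lt _ (by have := i.isLt; have := l.isLt; omega)]
  rfl

lemma key1 (N n q Kg : ℕ) (hA : Kg + q ≤ N - n) (hB : Kg + n ≤ N - q)
    (A G Yh : ℕ → ℝ) (hG : ∀ r, Kg ≤ r → G r = 0) (hAz : ∀ u, n + 1 ≤ u → A u = 0)
    (h0 : ∀ t, t < N - n → ∑ u ∈ range (n+1), A u * Yh (t + u) = 0)
    (l : ℕ) (hl : l ≤ q) :
    ∑ i ∈ range (N - q), Yh (i + l) * (∑ p ∈ Finset.HasAntidiagonal.antidiagonal i, G p.1 * A p.2) = 0 := by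
  have e1 : ∀ i ∈ range (N - q), Yh (i + l) * (∑ p ∈ Finset.HasAntidiagonal.antidiagonal i, G p.1 * A p.2)
      = ∑ r ∈ range Kg, ∑ u ∈ range (n+1), if r + u = i then G r * A u * Yh (i + l) else 0 := by
    intro i _
    rw [Finset.mul_sum,
      ← antidiagonal_eq_double (fun r u => G r * A u * Yh (i + l)) Kg (n+1)
        (fun r u hr => by show G r * A u * Yh (i+l) = 0; rw [hG r hr, zero_mul, zero_mul])
        (fun r u hu => by show G r * A u * Yh (i+l) = 0; rw [hAz u hu, mul_zero, zero_mul]) i]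
    apply Finset.sum_congr rfl
    intro p _
    ring
  rw [Finset.sum_congr rfl e1, Finset.sum_comm]
  apply Finset.sum_eq_zero
  intro r hr
  rw [Finset.mem_range] at hr
  rw [Finset.sum_comm]
  have e2 : ∀ u ∈ range (n+1),
      (∑ i ∈ range (N - q), if r + u = i then G r * A u * Yh (i + l) else 0)
        = G r * (A u * Yh ((r + l) + u)) := by
    intro u hu
    rw [Finset.mem_range] at hu
    have e3 : ∀ i ∈ range (N - q), (if r + u = i then G r * A u * Yh (i + l) else 0)
        = (if i = r + u then G r * A u * Yh (r + u + l) else 0) := by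
      intro i _
      by_cases h : r + u = i
      · rw [if_pos h, if_pos h.symm, ← h]
      · rw [if_neg h, if_neg (Ne.symm h)]
    rw [Finset.sum_congr rfl e3, Finset.sum_ite_eq' (range (N - q)) (r + u),
      if_pos (Finset.mem_range.2 (by omega))]
    have : r + u + l = r + l + u := by omega
    rw [this, mul_assoc]
  rw [Finset.sum_congr rfl e2, ← Finset.mul_sum, h0 (r + l) (by omega), mul_zero]

lemma key2 (n m q : ℕ) (hn : n = m + q) (C B Yh : ℕ → ℝ)
    (hC : ∀ s, m + 1 ≤ s → C s = 0) (hB : ∀ t, q + 1 ≤ t → B t = 0) (i : ℕ) :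
    ∑ s ∈ range (m+1), C s * (∑ t ∈ range (q+1), Yh ((i + s) + t) * B t)
      = ∑ u ∈ range (n+1),
          (∑ s ∈ range (m+1), ∑ t ∈ range (q+1), if s + t = u then C s * B t else 0)
            * Yh (i + u) := by
  have e1 : ∀ u ∈ range (n+1),
      (∑ s ∈ range (m+1), ∑ t ∈ range (q+1), if s + t = u then C s * B t else 0) * Yh (i + u)
        = ∑ s ∈ range (m+1), ∑ t ∈ range (q+1), if s + t = u then C s * B t * Yh (i + u) else 0 := by
    intro u _
    rw [Finset.sum_mul]
    apply Finset.sum_congr rfl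
    intro s _
    rw [Finset.sum_mul]
    apply Finset.sum_congr rfl
    intro t _
    split_ifs
    · rfl
    · rw [zero_mul]
  rw [Finset.sum_congr rfl e1, Finset.sum_comm]
  apply Finset.sum_congr rfl
  intro s hs
  rw [Finset.mem_range] at hs
  rw [Finset.sum_comm]
  have e2 : ∀ t ∈ range (q+1),
      (∑ u ∈ range (n+1), if s + t = u then C s * B t * Yh (i + u) else 0)
        = C s * (Yh ((i + s) + t) * B t) := by
    intro t ht
    rw [Finset.mem_range] at ht
    have e3 : ∀ u ∈ range (n+1), (if s + t = u then C s * B t * Yh (i + u) else 0)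
        = (if u = s + t then C s * B t * Yh (i + (s + t)) else 0) := by
      intro u _
      by_cases h : s + t = u
      · rw [if_pos h, if_pos h.symm, ← h]
      · rw [if_neg h, if_neg (Ne.symm h)]
    rw [Finset.sum_congr rfl e3, Finset.sum_ite_eq' (range (n+1)) (s + t),
      if_pos (Finset.mem_range.2 (by omega))]
    have : i + (s + t) = (i + s) + t := by omega
    rw [this]
    ring
  rw [Finset.sum_congr rfl e2, ← Finset.mul_sum]

/-- Every real solution `(b, g)` of the multiparameter eigenvalue system, with the
normalization `⟨b, e⟩ = 1`, yields a critical point of the fixed pole least squares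
realization problem: with `n = m + q`, `a = c ⋆ b`, `λ = T_{N-2n+m}(b)ᵀ g` and
`ŷ = y - T_{N-n}(a)ᵀ λ`, the four first-order optimality conditions hold (with `μ = 0`). -/
theorem stmt0 (N m q : ℕ) (hq : 1 ≤ q) (hN : m + 2 * q < N)
    (y : Fin N → ℝ) (c : Fin (m + 1) → ℝ) (e b : Fin (q + 1) → ℝ)
    (hbe : b ⬝ᵥ e = 1)
    (g : Fin (N - (m + 2 * q)) → ℝ)
    (hg : toep (N - (m + q)) N (m + q) (convVec m q c b) *ᵥ y =
      toep (N - (m + q)) N (m + q) (convVec m q c b) *ᵥ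
        ((toep (N - (m + q)) N (m + q) (convVec m q c b))ᵀ *ᵥ
          ((toep (N - (m + 2 * q)) (N - (m + q)) q b)ᵀ *ᵥ g)))
    (lam : Fin (N - (m + q)) → ℝ)
    (hlam : lam = (toep (N - (m + 2 * q)) (N - (m + q)) q b)ᵀ *ᵥ g)
    (yhat : Fin N → ℝ)
    (hyhat : yhat = y - (toep (N - (m + q)) N (m + q) (convVec m q c b))ᵀ *ᵥ lam) :
    (hank N q yhat)ᵀ *ᵥ ((toep (N - (m + q)) (N - q) m c)ᵀ *ᵥ lam) = 0 ∧
    yhat - y + (toep (N - (m + q)) N (m + q) (convVec m q c b))ᵀ *ᵥ lam = 0 ∧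
    toep (N - (m + q)) (N - q) m c *ᵥ (hank N q yhat *ᵥ b) = 0 ∧
    b ⬝ᵥ e = 1 := by
  have h0 : toep (N - (m + q)) N (m + q) (convVec m q c b) *ᵥ yhat = 0 := by
    rw [hyhat, Matrix.mulVec_sub, sub_eq_zero, hg, hlam]
  have h0' : ∀ t, t < N - (m + q) →
      ∑ u ∈ range (m + q + 1), pad (convVec m q c b) u * pad yhat (t + u) = 0 := by
    intro t ht
    have h := congrFun h0 ⟨t, ht⟩
    rw [toep_mulVec] at h
    simpa using h
  refine ⟨?_, ?_, ?_, hbe⟩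
  · funext l
    simp only [Pi.zero_apply]
    rw [hankT_mulVec]
    have hv : ∀ i : ℕ, pad ((toep (N - (m + q)) (N - q) m c)ᵀ *ᵥ lam) i
        = ∑ p ∈ Finset.HasAntidiagonal.antidiagonal i, pad g p.1 * pad (convVec m q c b) p.2 := by
      intro i
      have hPS : PS ((toep (N - (m + q)) (N - q) m c)ᵀ *ᵥ lam)
          = PS g * PS (convVec m q c b) := by
        rw [PS_toepT (N - (m + q)) (N - q) m c lam (by omega), hlam,
          PS_toepT (N - (m + 2 * q)) (N - (m + q)) q b g (by omega), PS_convVec]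
        ring
      have hco := congrArg (PowerSeries.coeff i) hPS
      rw [coeff_PS, PowerSeries.coeff_mul] at hco
      simpa only [coeff_PS] using hco
    have e1 : ∀ i ∈ range (N - q),
        pad yhat (i + l.val) * pad ((toep (N - (m + q)) (N - q) m c)ᵀ *ᵥ lam) i
          = pad yhat (i + l.val)
              * ∑ p ∈ Finset.HasAntidiagonal.antidiagonal i, pad g p.1 * pad (convVec m q c b) p.2 :=
      fun i _ => by rw [hv]
    rw [Finset.sum_congr rfl e1]
    exact key1 N (m + q) q (N - (m + 2 * q)) (by omega) (by omega)
      (pad (convVec m q c b)) (pad g) (pad yhat)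
      (fun r hr => pad_ge _ hr) (fun u hu => pad_ge _ hu) h0' l.val (by omega)
  · rw [hyhat]
    abel
  · funext i
    simp only [Pi.zero_apply]
    rw [toep_mulVec]
    have ew : ∀ s ∈ range (m + 1),
        pad c s * pad (hank N q yhat *ᵥ b) (i.val + s)
          = pad c s * (∑ t ∈ range (q + 1), pad yhat ((i.val + s) + t) * pad b t) := by
      intro s hsr
      rw [Finset.mem_range] at hsr
      have hlt : i.val + s < N - q := by have := i.isLt; omega
      rw [pad_lt _ hlt, hank_mulVec]
    rw [Finset.sum_congr rfl ew,
      key2 (m + q) m q rfl (pad c) (pad b) (pad yhat)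
        (fun s hs => pad_ge _ hs) (fun t ht => pad_ge _ ht) i.val]
    have e2 : ∀ u ∈ range (m + q + 1),
        (∑ s ∈ range (m + 1), ∑ t ∈ range (q + 1),
            if s + t = u then pad c s * pad b t else 0) * pad yhat (i.val + u)
          = pad (convVec m q c b) u * pad yhat (i.val + u) := by
      intro u _
      rw [← pad_convVec]
    rw [Finset.sum_congr rfl e2, h0' i.val i.isLt]
end

section
/- Let N, n, m, q be natural numbers with n = m + q, q ≥ 1 and N > 2n − m. Let y ∈ ℝ^N, c ∈ ℝ^{m+1}, e ∈ ℝ^{q+1}. Suppose b ∈ ℝ^{q+1}, ŷ ∈ ℝ^N and λ ∈ ℝ^{N−n} satisfy the first-order optimality conditions (with multiplier μ = 0): (i) H_q(ŷ)ᵀ T_{N−n}(c)ᵀ λ = 0, (ii) ŷ − y + T_{N−n}(a)ᵀ λ = 0 where a = c ⋆ b, (iii) T_{N−n}(c) H_q(ŷ) b = 0, and (iv) ⟨b, e⟩ = 1, and assume additionally that rank(T_{N−n}(c) H_q(ŷ)) = q. Then there exists g ∈ ℝ^{N−2n+m} such that λ = T_{N−2n+m}(b)ᵀ g and T_{N−n}(a)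 y = T_{N−n}(a) T_{N−n}(a)ᵀ T_{N−2n+m}(b)ᵀ g; consequently b is a real eigenvalue of the multiparameter eigenvalue problem A(b) z = 0 with A(b) = [ T_{N−n}(a) y | T_{N−n}(a) T_{N−n}(a)ᵀ T_{N−2n+m}(b)ᵀ ], with eigenvector z = (−1, gᵀ)ᵀ ≠ 0. -/
open Matrix

/-!
Write `w := T(c) ŷ` as a sequence. The filtered Hankel matrix `T(c) H_q(ŷ)` is the Hankel
matrix of `w`, so (iii) says that `T(b) w` vanishes on the relevant range. Toeplitz actions
compose by convolution and commute, which turns this into `T(a) ŷ = 0` and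
`T(b) T(c) H_q(ŷ) = 0`. As `b ≠ 0`, the rows of `T(b)` are independent (compare leading
terms), so `range T(b)ᵀ ⊆ ker (T(c) H_q(ŷ))ᵀ` is an inclusion of spaces of the same dimension
`N - 2n + m` by the rank hypothesis; hence (i) puts `λ` in the range of `T(b)ᵀ`. Finally (ii)
reads `y = ŷ + T(a)ᵀ λ`, and applying `T(a)` kills `ŷ`.
-/

open Finset

section ToeplitzSequences

variable {R : Type*}

def zeroExt [Zero R] {N : ℕ} (x : Fin N → R) (p : ℕ) : R :=
  if h : p < N then x ⟨p, h⟩ else 0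

/-- Row `p` of a banded Toeplitz matrix acting on a sequence; working with sequences frees the
row and column counts of the matrices. -/
def toepSeq [Semiring R] {n : ℕ} (a : Fin (n + 1) → R) (z : ℕ → R) (p : ℕ) : R :=
  ∑ t : Fin (n + 1), a t * z (p + t)

def hankSeq [Semiring R] (M q : ℕ) (z : ℕ → R) : Matrix (Fin M) (Fin (q + 1)) R :=
  Matrix.of fun l j => z (l + j)

lemma sum_ite_val_eq_zeroExt [AddCommMonoid R] {N : ℕ} (x : Fin N → R) (p : ℕ) :
    ∑ j : Fin N, (if (j : ℕ) = p then x j else 0) = zeroExt x p := by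
  unfold zeroExt
  split_ifs with hp
  · rw [Fintype.sum_eq_single ⟨p, hp⟩ fun j hj => if_neg fun h => hj (Fin.ext h)]
    exact if_pos rfl
  · exact Finset.sum_eq_zero fun j _ => if_neg (by omega)

lemma toep_apply_eq_sum [Semiring R] {k N n : ℕ} (a : Fin (n + 1) → R) (i : Fin k)
    (j : Fin N) : toep k N n a i j = ∑ t : Fin (n + 1), if (j : ℕ) = i + t then a t else 0 := by
  rw [toep, of_apply]
  split_ifs with h
  · rw [Fintype.sum_eq_single ⟨j - i, by omega⟩
      fun t ht => if_neg fun h' => ht (by ext; simp; omega)]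
    exact (if_pos (by simp; omega)).symm
  · exact (Finset.sum_eq_zero fun t _ => if_neg (by omega)).symm

lemma toep_mulVec_apply [Semiring R] {k N n : ℕ} (a : Fin (n + 1) → R) (x : Fin N → R)
    (i : Fin k) : (toep k N n a *ᵥ x) i = toepSeq a (zeroExt x) i := by
  simp only [mulVec, dotProduct, toep_apply_eq_sum, Finset.sum_mul, ite_mul, zero_mul]
  rw [Finset.sum_comm]
  refine Finset.sum_congr rfl fun t _ => ?_
  rw [← sum_ite_val_eq_zeroExt, Finset.mul_sum]
  exact Finset.sum_congr rfl fun j _ => by split_ifs <;> simp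

lemma hank_eq_hankSeq [Semiring R] {N q : ℕ} (y : Fin N → R) :
    hank N q y = hankSeq (N - q) q (zeroExt y) := by
  ext l j
  simp only [hank, hankSeq, of_apply, zeroExt]
  rw [dif_pos (by omega)]

lemma hankSeq_mulVec_apply [CommSemiring R] {M q : ℕ} (z : ℕ → R) (b : Fin (q + 1) → R)
    (l : Fin M) : (hankSeq M q z *ᵥ b) l = toepSeq b z l := by
  simp only [mulVec, dotProduct, hankSeq, of_apply, toepSeq, mul_comm]

lemma toep_mul_hankSeq [Semiring R] {k M n q : ℕ} (a : Fin (n + 1) → R) (z : ℕ → R)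
    (h : k + n ≤ M) : toep k M n a * hankSeq M q z = hankSeq k q (toepSeq a z) := by
  ext i j
  change (toep k M n a *ᵥ fun l => z (l + j)) i = toepSeq a z (i + j)
  rw [toep_mulVec_apply]
  refine Finset.sum_congr rfl fun t _ => ?_
  rw [zeroExt, dif_pos (by omega), add_right_comm]

lemma toepSeq_convVec [Semiring R] {m q : ℕ} (c : Fin (m + 1) → R) (b : Fin (q + 1) → R)
    (z : ℕ → R) : toepSeq (convVec m q c b) z = toepSeq c (toepSeq b z) := by
  funext p
  simp only [toepSeq, convVec, Finset.sum_mul, Finset.mul_sum, ite_mul, zero_mul]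
  rw [Finset.sum_comm]
  refine Finset.sum_congr rfl fun s _ => ?_
  rw [Finset.sum_comm]
  refine Finset.sum_congr rfl fun t _ => ?_
  rw [Fintype.sum_eq_single ⟨s + t, by omega⟩ fun u hu => if_neg fun h => hu (Fin.ext h.symm),
    if_pos rfl, mul_assoc, ← add_assoc]

lemma toepSeq_comm [CommSemiring R] {m q : ℕ} (c : Fin (m + 1) → R) (b : Fin (q + 1) → R)
    (z : ℕ → R) : toepSeq b (toepSeq c z) = toepSeq c (toepSeq b z) := by
  funext p
  simp only [toepSeq, Finset.mul_sum]
  rw [Finset.sum_comm]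
  refine Finset.sum_congr rfl fun s _ => Finset.sum_congr rfl fun t _ => ?_
  rw [add_right_comm, mul_left_comm]

lemma Fin.exists_last_ne_zero [Zero R] {k : ℕ} {v : Fin k → R} (hv : v ≠ 0) :
    ∃ d, v d ≠ 0 ∧ ∀ t, d < t → v t = 0 := by
  classical
  obtain ⟨t, ht⟩ := Function.ne_iff.mp hv
  obtain ⟨d, hd, hmax⟩ := (univ.filter (v · ≠ 0)).exists_max_image id ⟨t, by simpa using ht⟩
  refine ⟨d, (mem_filter.1 hd).2, fun t hdt => ?_⟩
  by_contra ht
  exact absurd (hmax t (by simpa using ht)) (not_le.2 hdt)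

lemma eq_zero_of_toep_transpose_mulVec_eq_zero [Semiring R] [NoZeroDivisors R] {k N n : ℕ}
    {b : Fin (n + 1) → R} (hb : b ≠ 0) (h : k + n ≤ N) {g : Fin k → R}
    (hg : (toep k N n b)ᵀ *ᵥ g = 0) : g = 0 := by
  by_contra hg₀
  obtain ⟨d, hd, hd_last⟩ := Fin.exists_last_ne_zero hb
  obtain ⟨i₁, hi₁, hi₁_last⟩ := Fin.exists_last_ne_zero hg₀
  -- Only the product of the two leading terms contributes to entry `i₁ + d`.
  have key : ((toep k N n b)ᵀ *ᵥ g) ⟨i₁ + d, by omega⟩ = b d * g i₁ := by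
    rw [mulVec, dotProduct, Fintype.sum_eq_single i₁]
    · simp only [transpose_apply, toep, of_apply]
      rw [dif_pos (by simp; omega)]
      congr 2
      ext
      simp
    · intro i hi
      rcases lt_or_gt_of_ne hi with hlt | hgt
      · simp only [transpose_apply, toep, of_apply]
        split_ifs
        · rw [hd_last _ (by rw [Fin.lt_def]; simp; omega), zero_mul]
        · rw [zero_mul]
      · rw [hi₁_last i hgt, mul_zero]
  exact mul_ne_zero hd hi₁ (key ▸ congrFun hg _)

end ToeplitzSequences

section FilteredHankel

variable {R : Type*} [CommSemiring R] {N m q : ℕ} {c : Fin (m + 1) → R} {b : Fin (q + 1) → R}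
  {yhat : Fin N → R}

lemma toep_mul_hank_eq_hankSeq (hN : m + q ≤ N) :
    toep (N - (m + q)) (N - q) m c * hank N q yhat =
      hankSeq (N - (m + q)) q (toepSeq c (zeroExt yhat)) := by
  rw [hank_eq_hankSeq, toep_mul_hankSeq _ _ (by omega)]

lemma toepSeq_toepSeq_eq_zero (hN : m + q ≤ N)
    (h : toep (N - (m + q)) (N - q) m c *ᵥ (hank N q yhat *ᵥ b) = 0) {p : ℕ}
    (hp : p < N - (m + q)) : toepSeq b (toepSeq c (zeroExt yhat)) p = 0 := by
  rw [← hankSeq_mulVec_apply (M := N - (m + q)) _ b ⟨p, hp⟩, ← toep_mul_hank_eq_hankSeq hN,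
    ← mulVec_mulVec, h, Pi.zero_apply]

lemma toep_convVec_mulVec_eq_zero (hN : m + q ≤ N)
    (h : toep (N - (m + q)) (N - q) m c *ᵥ (hank N q yhat *ᵥ b) = 0) :
    toep (N - (m + q)) N (m + q) (convVec m q c b) *ᵥ yhat = 0 := funext fun i => by
  rw [toep_mulVec_apply, toepSeq_convVec, ← toepSeq_comm]
  exact toepSeq_toepSeq_eq_zero hN h i.isLt

lemma toep_mul_toep_mul_hank_eq_zero (hN : m + 2 * q ≤ N)
    (h : toep (N - (m + q)) (N - q) m c *ᵥ (hank N q yhat *ᵥ b) = 0) :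
    toep (N - (m + 2 * q)) (N - (m + q)) q b * (toep (N - (m + q)) (N - q) m c * hank N q yhat)
      = 0 := by
  rw [toep_mul_hank_eq_hankSeq (by omega), toep_mul_hankSeq _ _ (by omega)]
  ext i j
  exact toepSeq_toepSeq_eq_zero (by omega) h (by omega)

end FilteredHankel

lemma Matrix.range_mulVecLin_eq_ker_of_mul_eq_zero {K ι κ μ : Type*} [Field K] [Fintype ι]
    [Fintype κ] [Fintype μ] {P : Matrix ι κ K} {Q : Matrix μ ι K}
    (hP : LinearMap.ker P.mulVecLin = ⊥) (hQP : Q * P = 0)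
    (hdim : Q.rank + Fintype.card κ = Fintype.card ι) :
    LinearMap.range P.mulVecLin = LinearMap.ker Q.mulVecLin := by
  have hle : LinearMap.range P.mulVecLin ≤ LinearMap.ker Q.mulVecLin := by
    rintro _ ⟨v, rfl⟩
    rw [LinearMap.mem_ker, mulVecLin_apply, mulVecLin_apply, mulVec_mulVec, hQP, zero_mulVec]
  refine Submodule.eq_of_le_of_finrank_le hle ?_
  have hrnP := LinearMap.finrank_range_add_finrank_ker P.mulVecLin
  have hrnQ := LinearMap.finrank_range_add_finrank_ker Q.mulVecLin
  rw [hP, finrank_bot, Module.finrank_fintype_fun_eq_card] at hrnP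
  rw [Module.finrank_fintype_fun_eq_card] at hrnQ
  change Q.rank + _ = _ at hrnQ
  omega

lemma Matrix.of_cons_mulVec_cons {R ι : Type*} [CommSemiring R] {r : ℕ} (u : ι → R)
    (W : Matrix ι (Fin r) R) (x : R) (g : Fin r → R) :
    (of fun i => (Fin.cons (u i) (W i) : Fin (r + 1) → R)) *ᵥ Fin.cons x g = x • u + W *ᵥ g :=
  mulVec_cons _ _ _

theorem stmt1_general (N m q : ℕ) (hN : m + 2 * q < N)
    (y : Fin N → ℝ) (c : Fin (m + 1) → ℝ) (e : Fin (q + 1) → ℝ)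
    (b : Fin (q + 1) → ℝ) (yhat : Fin N → ℝ) (lam : Fin (N - (m + q)) → ℝ)
    (h1 : (hank N q yhat)ᵀ *ᵥ ((toep (N - (m + q)) (N - q) m c)ᵀ *ᵥ lam) = 0)
    (h2 : yhat - y + (toep (N - (m + q)) N (m + q) (convVec m q c b))ᵀ *ᵥ lam = 0)
    (h3 : toep (N - (m + q)) (N - q) m c *ᵥ (hank N q yhat *ᵥ b) = 0)
    (h4 : b ⬝ᵥ e = 1)
    (hrank : (toep (N - (m + q)) (N - q) m c * hank N q yhat).rank = q) :
    ∃ g : Fin (N - (m + 2 * q)) → ℝ,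
      lam = (toep (N - (m + 2 * q)) (N - (m + q)) q b)ᵀ *ᵥ g ∧
      toep (N - (m + q)) N (m + q) (convVec m q c b) *ᵥ y =
        toep (N - (m + q)) N (m + q) (convVec m q c b) *ᵥ
          ((toep (N - (m + q)) N (m + q) (convVec m q c b))ᵀ *ᵥ
            ((toep (N - (m + 2 * q)) (N - (m + q)) q b)ᵀ *ᵥ g)) ∧
      (Matrix.of fun (i : Fin (N - (m + q))) =>
          Fin.cons ((toep (N - (m + q)) N (m + q) (convVec m q c b) *ᵥ y) i)
            (fun j : Fin (N - (m + 2 * q)) =>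
              (toep (N - (m + q)) N (m + q) (convVec m q c b) *
                (toep (N - (m + q)) N (m + q) (convVec m q c b))ᵀ *
                (toep (N - (m + 2 * q)) (N - (m + q)) q b)ᵀ) i j)) *ᵥ
        (Fin.cons (-1) g : Fin (N - (m + 2 * q) + 1) → ℝ) = 0 ∧
      (Fin.cons (-1) g : Fin (N - (m + 2 * q) + 1) → ℝ) ≠ 0 := by
  set A := toep (N - (m + q)) N (m + q) (convVec m q c b)
  set B := toep (N - (m + 2 * q)) (N - (m + q)) q b
  set CH := toep (N - (m + q)) (N - q) m c * hank N q yhat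
  have hb : b ≠ 0 := fun hb => by simp [hb] at h4
  have hrange : LinearMap.range Bᵀ.mulVecLin = LinearMap.ker CHᵀ.mulVecLin :=
    range_mulVecLin_eq_ker_of_mul_eq_zero
      (LinearMap.ker_eq_bot'.2 fun g => eq_zero_of_toep_transpose_mulVec_eq_zero hb (by omega))
      (by rw [← transpose_mul, toep_mul_toep_mul_hank_eq_zero hN.le h3, transpose_zero])
      (by rw [rank_transpose, hrank, Fintype.card_fin, Fintype.card_fin]; omega)
  obtain ⟨g, hg⟩ : lam ∈ LinearMap.range Bᵀ.mulVecLin := by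
    rw [hrange, LinearMap.mem_ker, mulVecLin_apply, transpose_mul, ← mulVec_mulVec]
    exact h1
  rw [mulVecLin_apply] at hg
  have hy : y = yhat + Aᵀ *ᵥ lam := by
    rw [← sub_eq_zero, ← neg_eq_zero, ← h2]
    abel
  have hAy : A *ᵥ y = A *ᵥ (Aᵀ *ᵥ (Bᵀ *ᵥ g)) := by
    rw [hg, hy, mulVec_add, toep_convVec_mulVec_eq_zero (by omega) h3, zero_add]
  refine ⟨g, hg.symm, hAy, ?_, fun h => by simpa using congrFun h 0⟩
  refine (of_cons_mulVec_cons (A *ᵥ y) (A * Aᵀ * Bᵀ) (-1) g).trans ?_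
  rw [← mulVec_mulVec, ← mulVec_mulVec, ← hAy, neg_one_smul, neg_add_cancel]

/-- Every critical point of the fixed pole problem (with `μ = 0`) at which the filtered
Hankel matrix has full rank `q` yields a real eigenvalue `b` of the multiparameter
eigenvalue problem `A(b) z = 0`, with
`A(b) = [ T_{N-n}(a) y | T_{N-n}(a) T_{N-n}(a)ᵀ T_{N-2n+m}(b)ᵀ ]` and
eigenvector `z = (-1, gᵀ)ᵀ ≠ 0`, where `λ = T_{N-2n+m}(b)ᵀ g`. -/
theorem stmt1 (N m q : ℕ) (hq : 1 ≤ q) (hN : m + 2 * q < N)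
    (y : Fin N → ℝ) (c : Fin (m + 1) → ℝ) (e : Fin (q + 1) → ℝ)
    (b : Fin (q + 1) → ℝ) (yhat : Fin N → ℝ) (lam : Fin (N - (m + q)) → ℝ)
    (h1 : (hank N q yhat)ᵀ *ᵥ ((toep (N - (m + q)) (N - q) m c)ᵀ *ᵥ lam) = 0)
    (h2 : yhat - y + (toep (N - (m + q)) N (m + q) (convVec m q c b))ᵀ *ᵥ lam = 0)
    (h3 : toep (N - (m + q)) (N - q) m c *ᵥ (hank N q yhat *ᵥ b) = 0)
    (h4 : b ⬝ᵥ e = 1)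
    (hrank : (toep (N - (m + q)) (N - q) m c * hank N q yhat).rank = q) :
    ∃ g : Fin (N - (m + 2 * q)) → ℝ,
      lam = (toep (N - (m + 2 * q)) (N - (m + q)) q b)ᵀ *ᵥ g ∧
      toep (N - (m + q)) N (m + q) (convVec m q c b) *ᵥ y =
        toep (N - (m + q)) N (m + q) (convVec m q c b) *ᵥ
          ((toep (N - (m + q)) N (m + q) (convVec m q c b))ᵀ *ᵥ
            ((toep (N - (m + 2 * q)) (N - (m + q)) q b)ᵀ *ᵥ g)) ∧
      (Matrix.of fun (i : Fin (N - (m + q))) =>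
          Fin.cons ((toep (N - (m + q)) N (m + q) (convVec m q c b) *ᵥ y) i)
            (fun j : Fin (N - (m + 2 * q)) =>
              (toep (N - (m + q)) N (m + q) (convVec m q c b) *
                (toep (N - (m + q)) N (m + q) (convVec m q c b))ᵀ *
                (toep (N - (m + 2 * q)) (N - (m + q)) q b)ᵀ) i j)) *ᵥ
        (Fin.cons (-1) g : Fin (N - (m + 2 * q) + 1) → ℝ) = 0 ∧
      (Fin.cons (-1) g : Fin (N - (m + 2 * q) + 1) → ℝ) ≠ 0 :=
  stmt1_general N m q hN y c e b yhat lam h1 h2 h3 h4 hrank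
end

section
/- Let N, n, m, q be natural numbers with n = m + q, q ≥ 1 and N > 2n − m. Let y ∈ ℝ^N, let b ∈ ℝ^{q+1} and c ∈ ℝ^{m+1} be nonzero real vectors, and set a = c ⋆ b ∈ ℝ^{n+1}. If z ∈ ℂ^{N−2n+m+1} is a nonzero vector satisfying [ T_{N−n}(a) y | T_{N−n}(a) T_{N−n}(a)ᵀ T_{N−2n+m}(b)ᵀ ] z = 0 (where the real matrices act on ℂ by entrywise complexification), then the first component of z is nonzero; that is, the eigenvector of the multiparameter eigenvalue problem can always be normalized so that its first entry equals 1. -/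
open Matrix

/-! If `z 0 = 0`, the tail `w` of `z` satisfies `A Aᵀ Bᵀ w = 0` with `A = T(c ⋆ b)` and
`B = T(b)`. Since `A` is real, `Aᵀ = Aᴴ`, and `A Aᴴ v = 0` forces `Aᴴ v = 0`; hence
`Aᵀ (Bᵀ w) = 0`. The transpose of a banded Toeplitz matrix multiplies coefficient vectors as
polynomials: the entry of `T(a)ᵀ x` at the sum of the lowest nonzero indices of `x` and `a` is
the product of those two lowest coefficients. Hence `T(a)ᵀ` is injective for `a ≠ 0`, which
gives `Bᵀ w = 0`, then `w = 0`, and so `z = 0`. -/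

theorem exists_ne_zero_forall_lt_eq_zero {ι M : Type*} [LinearOrder ι] [WellFoundedLT ι] [Zero M]
    {f : ι → M} (hf : f ≠ 0) : ∃ r, f r ≠ 0 ∧ ∀ i < r, f i = 0 := by
  obtain ⟨r, hr, hmin⟩ := wellFounded_lt.has_min {i | f i ≠ 0} (Function.ne_iff.mp hf)
  exact ⟨r, hr, fun i hi => not_not.mp fun h => hmin i h hi⟩

section Convolution

variable {R : Type*} [Semiring R] {k l : ℕ}

def conv (f : Fin k → R) (g : Fin l → R) (j : ℕ) : R :=
  ∑ i, ∑ t, if i.val + t.val = j then f i * g t else 0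

theorem conv_eq_mul_of_forall_lt_eq_zero {f : Fin k → R} {g : Fin l → R} {r : Fin k} {s : Fin l}
    (hr : ∀ i < r, f i = 0) (hs : ∀ t < s, g t = 0) : conv f g (r + s) = f r * g s := by
  rw [conv, ← Fintype.sum_prod_type', Fintype.sum_eq_single (r, s)]
  · simp
  · rintro ⟨i, t⟩ hit
    dsimp only at hit ⊢
    split_ifs with h
    · rcases lt_or_ge i r with hi | hi
      · rw [hr i hi, zero_mul]
      · have ht : t < s := by
          rw [Fin.le_def] at hi
          by_contra! ht
          rw [Fin.le_def] at ht
          exact hit (Prod.ext (Fin.ext (show (i : ℕ) = r by omega))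
            (Fin.ext (show (t : ℕ) = s by omega)))
        rw [hs t ht, mul_zero]
    · rfl

theorem exists_conv_ne_zero [NoZeroDivisors R] {f : Fin k → R} {g : Fin l → R}
    (hf : f ≠ 0) (hg : g ≠ 0) : ∃ (r : Fin k) (s : Fin l), conv f g (r + s) ≠ 0 := by
  obtain ⟨r, hr, hrmin⟩ := exists_ne_zero_forall_lt_eq_zero hf
  obtain ⟨s, hs, hsmin⟩ := exists_ne_zero_forall_lt_eq_zero hg
  exact ⟨r, s, by rw [conv_eq_mul_of_forall_lt_eq_zero hrmin hsmin]; exact mul_ne_zero hr hs⟩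

theorem convVec_ne_zero [NoZeroDivisors R] {m q : ℕ} {c : Fin (m + 1) → R}
    {b : Fin (q + 1) → R} (hc : c ≠ 0) (hb : b ≠ 0) : convVec m q c b ≠ 0 := by
  obtain ⟨r, s, hrs⟩ := exists_conv_ne_zero hc hb
  exact fun h => hrs (congrFun h ⟨r + s, by omega⟩)

end Convolution

section Toeplitz

variable {k N n : ℕ}

theorem toep_map {R S : Type*} [Semiring R] [Semiring S] (f : R →+* S) (a : Fin (n + 1) → R) :
    (toep k N n a).map f = toep k N n (f ∘ a) := by
  ext i j
  simp only [toep, map_apply, of_apply]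
  split_ifs <;> simp

variable {R : Type*} [CommSemiring R]

theorem toep_transpose_mulVec_apply (a : Fin (n + 1) → R) (x : Fin k → R) (j : Fin N) :
    ((toep k N n a)ᵀ *ᵥ x) j = conv x a j := by
  simp only [mulVec, dotProduct, transpose_apply, toep, of_apply, conv]
  refine Finset.sum_congr rfl fun i _ => ?_
  split_ifs with h
  · rw [Finset.sum_eq_single ⟨j - i, by omega⟩]
    · simp only [mul_comm, if_pos (by omega : (i : ℕ) + (j - i) = j)]
    · intro t _ ht
      rw [if_neg]
      exact fun h' => ht (Fin.ext (by simp; omega))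
    · simp
  · rw [zero_mul, eq_comm]
    exact Finset.sum_eq_zero fun t _ => if_neg (by omega)

theorem toep_transpose_mulVec_eq_zero_iff [NoZeroDivisors R] (hkN : k + n ≤ N)
    {a : Fin (n + 1) → R} (ha : a ≠ 0) {x : Fin k → R} :
    (toep k N n a)ᵀ *ᵥ x = 0 ↔ x = 0 := by
  refine ⟨fun hx => ?_, by rintro rfl; exact mulVec_zero _⟩
  by_contra hx0
  obtain ⟨r, s, hrs⟩ := exists_conv_ne_zero hx0 ha
  have h := congrFun hx ⟨r + s, by omega⟩
  rw [toep_transpose_mulVec_apply] at h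
  exact hrs h

end Toeplitz

theorem Matrix.transpose_map_ofRealHom_eq_conjTranspose {m n : Type*} (A : Matrix m n ℝ) :
    (A.map Complex.ofRealHom)ᵀ = (A.map Complex.ofRealHom)ᴴ := by
  rw [← conjTranspose_map _ fun x => by simp, conjTranspose_eq_transpose_of_trivial,
    transpose_map]

open scoped ComplexOrder in
theorem eq_zero_of_toep_mul_toep_transpose_mul_toep_transpose_mulVec_eq_zero {k l N n p : ℕ}
    (hkN : k + n ≤ N) (hlk : l + p ≤ k) {a : Fin (n + 1) → ℝ} {b : Fin (p + 1) → ℝ}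
    (ha : a ≠ 0) (hb : b ≠ 0) {w : Fin l → ℂ}
    (hw : (toep k N n a * (toep k N n a)ᵀ * (toep l k p b)ᵀ).map Complex.ofRealHom *ᵥ w = 0) :
    w = 0 := by
  have hℂ {d : ℕ} {v : Fin d → ℝ} (hv : v ≠ 0) : Complex.ofRealHom ∘ v ≠ 0 :=
    fun h => hv (funext fun t => by simpa using congrFun h t)
  rwa [Matrix.map_mul, Matrix.map_mul, transpose_map, transpose_map,
    transpose_map_ofRealHom_eq_conjTranspose (toep k N n a), ← mulVec_mulVec,
    self_mul_conjTranspose_mulVec_eq_zero, ← transpose_map_ofRealHom_eq_conjTranspose,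
    toep_map, toep_map, toep_transpose_mulVec_eq_zero_iff hkN (hℂ ha),
    toep_transpose_mulVec_eq_zero_iff hlk (hℂ hb)] at hw

theorem stmt2_general (N m q : ℕ) (hN : m + 2 * q < N)
    (y : Fin N → ℝ) (b : Fin (q + 1) → ℝ) (c : Fin (m + 1) → ℝ)
    (hb : b ≠ 0) (hc : c ≠ 0)
    (z : Fin (N - (m + 2 * q) + 1) → ℂ) (hz : z ≠ 0)
    (hAz : (Matrix.of fun (i : Fin (N - (m + q))) =>
        (Fin.cons (((toep (N - (m + q)) N (m + q) (convVec m q c b) *ᵥ y) i : ℝ) : ℂ)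
          (fun j : Fin (N - (m + 2 * q)) =>
            (((toep (N - (m + q)) N (m + q) (convVec m q c b) *
              (toep (N - (m + q)) N (m + q) (convVec m q c b))ᵀ *
              (toep (N - (m + 2 * q)) (N - (m + q)) q b)ᵀ) i j : ℝ) : ℂ)) :
          Fin (N - (m + 2 * q) + 1) → ℂ)) *ᵥ z = 0) :
    z 0 ≠ 0 := by
  intro hz0
  rw [← cons_head_tail z, vecHead, hz0, mulVec_cons, zero_smul, zero_add] at hAz
  have hw : vecTail z = 0 :=
    eq_zero_of_toep_mul_toep_transpose_mul_toep_transpose_mulVec_eq_zero (by omega) (by omega)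
      (convVec_ne_zero hc hb) hb hAz
  exact hz (by rw [← cons_head_tail z, vecHead, hz0, hw, cons_zero_zero])

/-- For nonzero real `b` and `c` with `a = c ⋆ b`, any nonzero complex vector `z` in the
kernel of `[ T_{N-n}(a) y | T_{N-n}(a) T_{N-n}(a)ᵀ T_{N-2n+m}(b)ᵀ ]` (entrywise
complexified) has a nonzero first component, so the eigenvector can be normalized so
that its first entry equals 1. -/
theorem stmt2 (N m q : ℕ) (hq : 1 ≤ q) (hN : m + 2 * q < N)
    (y : Fin N → ℝ) (b : Fin (q + 1) → ℝ) (c : Fin (m + 1) → ℝ)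
    (hb : b ≠ 0) (hc : c ≠ 0)
    (z : Fin (N - (m + 2 * q) + 1) → ℂ) (hz : z ≠ 0)
    (hAz : (Matrix.of fun (i : Fin (N - (m + q))) =>
        (Fin.cons (((toep (N - (m + q)) N (m + q) (convVec m q c b) *ᵥ y) i : ℝ) : ℂ)
          (fun j : Fin (N - (m + 2 * q)) =>
            (((toep (N - (m + q)) N (m + q) (convVec m q c b) *
              (toep (N - (m + q)) N (m + q) (convVec m q c b))ᵀ *
              (toep (N - (m + 2 * q)) (N - (m + q)) q b)ᵀ) i j : ℝ) : ℂ)) :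
          Fin (N - (m + 2 * q) + 1) → ℂ)) *ᵥ z = 0) :
    z 0 ≠ 0 :=
  stmt2_general N m q hN y b c hb hc z hz hAz
end

section
/- Let N, n, m, q be natural numbers with n = m + q, q ≥ 1 and N > 2n. Let y ∈ ℝ^N, let c ∈ ℝ^{m+1} have last entry equal to 1 (i.e., c represents a monic polynomial of degree m), and let e ∈ ℝ^{q+1}. Consider the feasible set S = {(b, ŷ) ∈ ℝ^{q+1} × ℝ^N : T_{N−n}(c) T_{N−q}(b) ŷ = 0 and ⟨b, e⟩ = 1}. If (b̂, ŷ̂) ∈ S is a local minimizer on S of the function (b, ŷ) ↦ ‖y − ŷ‖₂², and the misfit is nonzero (ŷ̂ ≠ y), then the filtered Hankel matrix has full rank: rank(T_{N−n}(c) H_q(ŷ̂)) = q; i.e., the filtered model-compliant output data have exactly q-th order dynamics. -/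
open Matrix

open Polynomial

/-- The polynomial with coefficient vector `v` (index = exponent). -/
noncomputable def pv {L : ℕ} (v : Fin L → ℝ) : Polynomial ℝ := ∑ i, C (v i) * X ^ (i : ℕ)

lemma pv_coeff {L : ℕ} (v : Fin L → ℝ) (j : ℕ) :
    (pv v).coeff j = if h : j < L then v ⟨j, h⟩ else 0 := by
  rw [pv, Polynomial.finset_sum_coeff]
  simp only [coeff_C_mul, coeff_X_pow]
  by_cases h : j < L
  · rw [dif_pos h, Finset.sum_eq_single (⟨j, h⟩ : Fin L)]
    · simp
    · intro i _ hi
      simp only [mul_ite, mul_one, mul_zero, ite_eq_right_iff]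
      intro hji; exact absurd (Fin.ext hji.symm) hi
    · simp
  · rw [dif_neg h, Finset.sum_eq_zero]
    intro i _
    have : j ≠ (i : ℕ) := by have := i.isLt; omega
    simp [this]

lemma pv_eq_zero_iff {L : ℕ} (v : Fin L → ℝ) : pv v = 0 ↔ v = 0 := by
  constructor
  · intro h
    funext i
    have := congrArg (fun p => Polynomial.coeff p (i : ℕ)) h
    simp [pv_coeff, i.isLt] at this
    simpa using this
  · rintro rfl; simp [pv]

lemma pv_add_smul {L : ℕ} (x yv : Fin L → ℝ) (s : ℝ) :
    pv (x + s • yv) = pv x + C s * pv yv := by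
  rw [pv, pv, pv, Finset.mul_sum, ← Finset.sum_add_distrib]
  refine Finset.sum_congr rfl fun i _ => ?_
  simp only [Pi.add_apply, Pi.smul_apply, smul_eq_mul, C_add, C_mul]
  ring

lemma pv_mul_toepT (k n Nc : ℕ) (hk : k + n ≤ Nc) (a : Fin (n + 1) → ℝ) (w : Fin k → ℝ) :
    pv ((toep k Nc n a)ᵀ *ᵥ w) = pv a * pv w := by
  ext j
  have key : ∀ t : Fin k,
      (∑ u : Fin (n + 1), if j = (u : ℕ) + (t : ℕ) then a u * w t else 0)
      = (if ht : (t : ℕ) ≤ j ∧ j - (t : ℕ) ≤ n then a ⟨j - t, by omega⟩ else 0) * w t := by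
    intro t
    by_cases ht : (t : ℕ) ≤ j ∧ j - (t : ℕ) ≤ n
    · rw [dif_pos ht, Finset.sum_eq_single (⟨j - t, by omega⟩ : Fin (n + 1))]
      · rw [if_pos (show j = ((⟨j - (t : ℕ), by omega⟩ : Fin (n + 1)) : ℕ) + (t : ℕ) by simp; omega)]
      · intro u _ hu
        have : j ≠ (u : ℕ) + (t : ℕ) := by
          intro hj; apply hu; apply Fin.ext; simp; omega
        simp [this]
      · simp
    · rw [dif_neg ht, zero_mul, Finset.sum_eq_zero]
      intro u _
      have := u.isLt
      have : j ≠ (u : ℕ) + (t : ℕ) := by omega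
      simp [this]
  have rhs : (pv a * pv w).coeff j
      = ∑ t : Fin k, (if ht : (t : ℕ) ≤ j ∧ j - (t : ℕ) ≤ n then a ⟨j - t, by omega⟩ else 0) * w t := by
    rw [pv, pv, Finset.sum_mul_sum]
    simp only [Polynomial.finset_sum_coeff]
    rw [Finset.sum_comm]
    refine Finset.sum_congr rfl fun t _ => ?_
    rw [← key t]
    refine Finset.sum_congr rfl fun u _ => ?_
    have : C (a u) * X ^ (u : ℕ) * (C (w t) * X ^ (t : ℕ))
        = C (a u * w t) * X ^ ((u : ℕ) + (t : ℕ)) := by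
      rw [C_mul, pow_add]; ring
    rw [this, coeff_C_mul, coeff_X_pow, mul_ite, mul_one, mul_zero]
  rw [rhs, pv_coeff]
  by_cases h : j < Nc
  · rw [dif_pos h]
    show ((toep k Nc n a)ᵀ *ᵥ w) ⟨j, h⟩ = _
    simp only [Matrix.mulVec, dotProduct, Matrix.transpose_apply, toep, Matrix.of_apply]
  · rw [dif_neg h, eq_comm, Finset.sum_eq_zero]
    intro t _
    have := t.isLt
    have : ¬((t : ℕ) ≤ j ∧ j - (t : ℕ) ≤ n) := by omega
    rw [dif_neg this, zero_mul]

lemma toep_mulVec_eq_hank (N q : ℕ) (b : Fin (q + 1) → ℝ) (x : Fin N → ℝ) :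
    toep (N - q) N q b *ᵥ x = hank N q x *ᵥ b := by
  funext i
  have hi := i.isLt
  simp only [Matrix.mulVec, dotProduct, toep, hank, Matrix.of_apply]
  have key : ∀ j : Fin N,
      (if h : (i : ℕ) ≤ (j : ℕ) ∧ (j : ℕ) - (i : ℕ) ≤ q then b ⟨(j : ℕ) - i, by omega⟩ else 0) * x j
      = ∑ t : Fin (q + 1), if (j : ℕ) = (i : ℕ) + (t : ℕ) then x j * b t else 0 := by
    intro j
    by_cases h : (i : ℕ) ≤ (j : ℕ) ∧ (j : ℕ) - (i : ℕ) ≤ q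
    · rw [dif_pos h, eq_comm, Finset.sum_eq_single (⟨(j : ℕ) - i, by omega⟩ : Fin (q + 1))]
      · rw [if_pos (by simp; omega)]; ring
      · intro t _ ht
        have : (j : ℕ) ≠ (i : ℕ) + (t : ℕ) := by
          intro hj; apply ht; apply Fin.ext; simp; omega
        simp [this]
      · simp
    · rw [dif_neg h, zero_mul, eq_comm, Finset.sum_eq_zero]
      intro t _
      have := t.isLt
      have : (j : ℕ) ≠ (i : ℕ) + (t : ℕ) := by omega
      simp [this]
  rw [Finset.sum_congr rfl fun j _ => key j, Finset.sum_comm]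
  refine Finset.sum_congr rfl fun t _ => ?_
  have ht := t.isLt
  rw [Finset.sum_eq_single (⟨(i : ℕ) + t, by omega⟩ : Fin N)]
  · rw [if_pos (by simp)]
  · intro j _ hj
    have : (j : ℕ) ≠ (i : ℕ) + (t : ℕ) := by
      intro hj'; apply hj; apply Fin.ext; simpa using hj'
    simp [this]
  · simp

lemma mem_range_of_orth {k N : ℕ} (A : Matrix (Fin k) (Fin N) ℝ) (v : Fin N → ℝ)
    (h : ∀ u : Fin N → ℝ, A *ᵥ u = 0 → v ⬝ᵥ u = 0) : ∃ μ, Aᵀ *ᵥ μ = v := by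
  by_contra hno
  push_neg at hno
  set W : Submodule ℝ (Fin N → ℝ) := LinearMap.range (Aᵀ).mulVecLin with hW
  have hv : v ∉ W := by
    rintro ⟨μ, hμ⟩
    exact hno μ (by rw [← hμ]; rfl)
  have hmk : (Submodule.Quotient.mk v : (Fin N → ℝ) ⧸ W) ≠ 0 := by
    simpa [Submodule.Quotient.mk_eq_zero] using hv
  have : ¬ ∀ φ : Module.Dual ℝ ((Fin N → ℝ) ⧸ W), φ (Submodule.Quotient.mk v) = 0 := by
    rw [Module.forall_dual_apply_eq_zero_iff]; exact hmk
  push_neg at this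
  obtain ⟨φ, hφ⟩ := this
  set g : (Fin N → ℝ) →ₗ[ℝ] ℝ := φ.comp W.mkQ with hg
  have hgW : ∀ x ∈ W, g x = 0 := by
    intro x hx
    simp [hg, (Submodule.Quotient.mk_eq_zero W).2 hx]
  set u : Fin N → ℝ := fun i => g (fun j => if i = j then 1 else 0) with hu
  have hgdot : ∀ x : Fin N → ℝ, g x = x ⬝ᵥ u := by
    intro x
    rw [LinearMap.pi_apply_eq_sum_univ g x]
    simp [dotProduct, hu, smul_eq_mul]
  have hAu : A *ᵥ u = 0 := by
    funext i
    have hcol : (fun j => A i j) = Aᵀ *ᵥ (fun i' => if i = i' then 1 else 0) := by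
      funext j
      simp [Matrix.mulVec, dotProduct, Matrix.transpose_apply]
    have : g (fun j => A i j) = 0 := by
      rw [hcol]; exact hgW _ ⟨_, rfl⟩
    rw [hgdot] at this
    simpa [Matrix.mulVec, dotProduct] using this
  have hvu : v ⬝ᵥ u = 0 := h u hAu
  rw [← hgdot] at hvu
  exact hφ hvu

lemma quad_zero (cvu cuu τ : ℝ) (hτ : 0 < τ) (hcuu : 0 ≤ cuu)
    (h : ∀ t : ℝ, |t| < τ → 0 ≤ -(2 * t * cvu) + t ^ 2 * cuu) : cvu = 0 := by
  by_contra h0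
  have habs : 0 < |cvu| := abs_pos.mpr h0
  set θ : ℝ := min (τ / (2 * (|cvu| + 1))) (1 / (cuu + 1)) with hθ
  have hθ1 : θ ≤ τ / (2 * (|cvu| + 1)) := min_le_left _ _
  have hθ2 : θ ≤ 1 / (cuu + 1) := min_le_right _ _
  have hθpos : 0 < θ := lt_min (by positivity) (by positivity)
  have ht : |cvu * θ| < τ := by
    rw [abs_mul, abs_of_pos hθpos]
    have h1 : |cvu| * θ ≤ |cvu| * (τ / (2 * (|cvu| + 1))) :=
      mul_le_mul_of_nonneg_left hθ1 (abs_nonneg cvu)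
    have h2 : |cvu| * (τ / (2 * (|cvu| + 1))) < τ := by
      rw [mul_div_assoc', div_lt_iff₀ (by positivity)]
      nlinarith
    linarith
  have h3 := h (cvu * θ) ht
  have h4 : θ * (cuu + 1) ≤ 1 := by
    rw [← le_div_iff₀ (by positivity)]
    exact hθ2
  have h5 : 0 < cvu ^ 2 := by
    have := pow_pos habs 2
    rwa [sq_abs] at this
  nlinarith [mul_pos h5 hθpos, sq_nonneg (cvu * θ)]

lemma poly_endgame (F G V : Polynomial ℝ) (hV : V ≠ 0) (hG : G ≠ 0)
    (T : Set ℝ) (hT : T.Infinite) (hdvd : ∀ s ∈ T, (F + C s * G) ∣ V) :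
    ∃ r : ℝ, F = C r * G := by
  set g : Polynomial ℝ := GCDMonoid.gcd F G with hgdef
  have hg : g ≠ 0 := gcd_ne_zero_of_right hG
  set α : Polynomial ℝ := F / g with hα
  set β : Polynomial ℝ := G / g with hβ
  have hF : g * α = F := EuclideanDomain.mul_div_cancel' hg (gcd_dvd_left F G)
  have hGg : g * β = G := EuclideanDomain.mul_div_cancel' hg (gcd_dvd_right F G)
  have hβ0 : β ≠ 0 := right_div_gcd_ne_zero hG
  have hco : IsCoprime α β := isCoprime_div_gcd_div_gcd hG
  have hd : ∀ s ∈ T, (α + C s * β) ∣ V := by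
    intro s hs
    have h1 : F + C s * G = g * (α + C s * β) := by
      rw [← hF, ← hGg]; ring
    exact dvd_trans (Dvd.intro_left g rfl) (h1 ▸ hdvd s hs)
  by_cases hbad : ∃ s₁ s₂ : ℝ, s₁ ≠ s₂ ∧ (α + C s₁ * β).natDegree = 0 ∧ (α + C s₂ * β).natDegree = 0
  · obtain ⟨s₁, s₂, hne, h₁, h₂⟩ := hbad
    have e₁ := Polynomial.eq_C_of_natDegree_eq_zero h₁
    have e₂ := Polynomial.eq_C_of_natDegree_eq_zero h₂
    set k₁ := (α + C s₁ * β).coeff 0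
    set k₂ := (α + C s₂ * β).coeff 0
    have hsub : C (s₁ - s₂) * β = C (k₁ - k₂) := by
      have : (α + C s₁ * β) - (α + C s₂ * β) = C (s₁ - s₂) * β := by
        rw [C_sub]; ring
      rw [← this, e₁, e₂, ← C_sub]
    have hs12 : (s₁ - s₂) ≠ 0 := sub_ne_zero.mpr hne
    have hβC : β = C ((k₁ - k₂) / (s₁ - s₂)) := by
      have h2 : C (s₁ - s₂) * β = C (s₁ - s₂) * C ((k₁ - k₂) / (s₁ - s₂)) := by
        rw [hsub, ← C_mul]
        congr 1
        field_simp
      exact mul_left_cancel₀ (Polynomial.C_ne_zero.mpr hs12) h2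
    set b₀ := (k₁ - k₂) / (s₁ - s₂) with hb₀
    have hb₀0 : b₀ ≠ 0 := by
      intro h; apply hβ0; rw [hβC, h, map_zero]
    have hαC : α = C (k₁ - s₁ * b₀) := by
      have : α = (α + C s₁ * β) - C s₁ * β := by ring
      rw [this, e₁, hβC, ← C_mul, ← C_sub]
    refine ⟨(k₁ - s₁ * b₀) / b₀, ?_⟩
    rw [← hF, ← hGg, hαC, hβC]
    rw [mul_comm (C ((k₁ - s₁ * b₀) / b₀)) (g * C b₀), mul_assoc, ← C_mul]
    congr 1
    field_simp
  · push_neg at hbad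
    exfalso
    have hBsub : Set.Subsingleton {s : ℝ | (α + C s * β).natDegree = 0} := by
      intro s₁ h₁ s₂ h₂
      by_contra hne
      exact hbad s₁ s₂ hne h₁ h₂
    have hT' : (T \ {s : ℝ | (α + C s * β).natDegree = 0}).Infinite :=
      hT.diff hBsub.finite
    obtain ⟨t, htsub, htcard⟩ := hT'.exists_subset_card_eq (V.natDegree + 1)
    have hdeg : ∀ s ∈ t, 1 ≤ (α + C s * β).natDegree := by
      intro s hs
      have := (htsub hs).2
      simp only [Set.mem_setOf_eq] at this
      omega
    have hne0 : ∀ s ∈ t, (α + C s * β) ≠ 0 := by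
      intro s hs h0
      have := hdeg s hs
      rw [h0] at this
      simp at this
    have hpair : (↑t : Set ℝ).Pairwise (Function.onFun IsCoprime fun s => α + C s * β) := by
      intro s₁ _ s₂ _ hne
      have h1 : IsCoprime (α + C s₁ * β) β := hco.add_mul_right_left (C s₁)
      have hunit : IsUnit (C (s₂ - s₁) : Polynomial ℝ) :=
        Polynomial.isUnit_C.mpr (isUnit_iff_ne_zero.mpr (sub_ne_zero.mpr hne.symm))
      have h2 : IsCoprime (α + C s₁ * β) (β * C (s₂ - s₁)) :=
        (isCoprime_mul_unit_right_right hunit _ _).mpr h1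
      have h3 : IsCoprime (α + C s₁ * β) (β * C (s₂ - s₁) + (α + C s₁ * β) * 1) :=
        h2.add_mul_left_right 1
      have : α + C s₂ * β = β * C (s₂ - s₁) + (α + C s₁ * β) * 1 := by
        rw [C_sub]; ring
      rw [Function.onFun, this]
      exact h3
    have hproddvd : (∏ s ∈ t, (α + C s * β)) ∣ V :=
      Finset.prod_dvd_of_coprime hpair (fun s hs => hd s (htsub hs).1)
    have hdegle := Polynomial.natDegree_le_of_dvd hproddvd hV
    rw [Polynomial.natDegree_prod _ _ hne0] at hdegle
    have hcs := Finset.card_nsmul_le_sum t (fun s => (α + C s * β).natDegree) 1 hdeg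
    rw [htcard] at hcs
    simp only [smul_eq_mul, mul_one] at hcs
    omega

lemma sum_sq_expand {N : ℕ} (v u : Fin N → ℝ) (t : ℝ) :
    ∑ i, (v i - t * u i) ^ 2
      = (∑ i, (v i) ^ 2) + (-(2 * t * (v ⬝ᵥ u)) + t ^ 2 * (u ⬝ᵥ u)) := by
  have h : ∀ i : Fin N, (v i - t * u i) ^ 2
      = (v i) ^ 2 + (-(2 * t * (v i * u i)) + t ^ 2 * (u i * u i)) := fun i => by ring
  simp_rw [h, Finset.sum_add_distrib, Finset.sum_neg_distrib, ← Finset.mul_sum, dotProduct]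

/-- At any local minimizer `(b̂, ŷ̂)` of the fixed pole least squares realization problem
(over the feasible set `S` defined by `T_{N-n}(c) T_{N-q}(b) ŷ = 0` and `⟨b, e⟩ = 1`,
with monic `c`) whose misfit is nonzero, the filtered Hankel matrix
`T_{N-n}(c) H_q(ŷ̂)` has full rank `q`. -/
theorem stmt3 (N m q : ℕ) (hq : 1 ≤ q) (hN : 2 * (m + q) < N)
    (y : Fin N → ℝ) (c : Fin (m + 1) → ℝ) (hc : c (Fin.last m) = 1)
    (e : Fin (q + 1) → ℝ)
    (S : Set ((Fin (q + 1) → ℝ) × (Fin N → ℝ)))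
    (hS : S = {p | toep (N - (m + q)) (N - q) m c *ᵥ
        (toep (N - q) N q p.1 *ᵥ p.2) = 0 ∧ p.1 ⬝ᵥ e = 1})
    (bh : Fin (q + 1) → ℝ) (yh : Fin N → ℝ)
    (hmem : (bh, yh) ∈ S)
    (hmin : IsLocalMinOn (fun p : (Fin (q + 1) → ℝ) × (Fin N → ℝ) =>
        ∑ i, (y i - p.2 i) ^ 2) S (bh, yh))
    (hne : yh ≠ y) :
    (toep (N - (m + q)) (N - q) m c * hank N q yh).rank = q := by
  have hmem' := hmem
  rw [hS] at hmem'
  obtain ⟨hfeas, hbe⟩ := hmem'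
  set A0 := toep (N - (m + q)) (N - q) m c with hA0
  set M := A0 * hank N q yh with hM
  -- b̂ is in the kernel of M
  have hMb : M *ᵥ bh = 0 := by
    rw [hM, ← Matrix.mulVec_mulVec, ← toep_mulVec_eq_hank N q bh yh]
    exact hfeas
  have hbh0 : bh ≠ 0 := by
    intro h
    rw [h] at hbe
    simp [dotProduct] at hbe
  -- rank-nullity
  have hrk : M.rank + Module.finrank ℝ ↥(LinearMap.ker M.mulVecLin) = q + 1 := by
    rw [Matrix.rank, LinearMap.finrank_range_add_finrank_ker]
    simp
  have hker_pos : 0 < Module.finrank ℝ ↥(LinearMap.ker M.mulVecLin) := by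
    have hne' : LinearMap.ker M.mulVecLin ≠ ⊥ := by
      intro h
      have : bh ∈ LinearMap.ker M.mulVecLin := by
        rw [LinearMap.mem_ker, Matrix.mulVecLin_apply, hMb]
      rw [h] at this
      exact hbh0 (by simpa using this)
    rcases Nat.eq_zero_or_pos (Module.finrank ℝ ↥(LinearMap.ker M.mulVecLin)) with h | h
    · exact absurd (Submodule.finrank_eq_zero.mp h) hne'
    · exact h
  have hrank_le : M.rank ≤ q := by omega
  -- it remains to exclude rank < q
  by_contra hgoal
  have hrank_lt : M.rank < q := lt_of_le_of_ne hrank_le hgoal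
  have hker2 : 2 ≤ Module.finrank ℝ ↥(LinearMap.ker M.mulVecLin) := by omega
  -- the dot-with-e functional
  set φ : (Fin (q + 1) → ℝ) →ₗ[ℝ] ℝ :=
    { toFun := fun b => b ⬝ᵥ e
      map_add' := fun x₁ x₂ => add_dotProduct x₁ x₂ e
      map_smul' := fun r x => smul_dotProduct r x e } with hφ
  have hkerφ : q ≤ Module.finrank ℝ ↥(LinearMap.ker φ) := by
    have h1 : Module.finrank ℝ ↥(LinearMap.range φ) + Module.finrank ℝ ↥(LinearMap.ker φ)
        = q + 1 := by
      rw [LinearMap.finrank_range_add_finrank_ker]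
      simp
    have h2 : Module.finrank ℝ ↥(LinearMap.range φ) ≤ 1 := by
      have := Submodule.finrank_le (LinearMap.range φ)
      simpa using this
    omega
  -- find b' in ker M with b' ⬝ᵥ e = 0, b' ≠ 0
  obtain ⟨b', hb'mem, hb'0⟩ : ∃ b' ∈ LinearMap.ker M.mulVecLin ⊓ LinearMap.ker φ, b' ≠ 0 := by
    rw [← Submodule.ne_bot_iff]
    intro hbot
    have hsum := Submodule.finrank_sup_add_finrank_inf_eq
      (LinearMap.ker M.mulVecLin) (LinearMap.ker φ)
    rw [hbot] at hsum
    simp only [finrank_bot, add_zero] at hsum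
    have hle : Module.finrank ℝ ↥(LinearMap.ker M.mulVecLin ⊔ LinearMap.ker φ) ≤ q + 1 := by
      have := Submodule.finrank_le (LinearMap.ker M.mulVecLin ⊔ LinearMap.ker φ)
      simpa using this
    omega
  obtain ⟨hb'ker, hb'e⟩ := Submodule.mem_inf.mp hb'mem
  have hMb' : M *ᵥ b' = 0 := by
    rw [LinearMap.mem_ker, Matrix.mulVecLin_apply] at hb'ker
    exact hb'ker
  have hb'e0 : b' ⬝ᵥ e = 0 := hb'e
  -- the misfit vector
  set v : Fin N → ℝ := fun i => y i - yh i with hv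
  have hv0 : v ≠ 0 := by
    intro h
    apply hne
    funext i
    have := congrFun h i
    simp [hv] at this
    linarith
  -- extract a metric neighborhood from local minimality
  obtain ⟨ε, hε, hball⟩ := Metric.mem_nhdsWithin_iff.mp hmin
  set δ : ℝ := ε / (‖b'‖ + 1) with hδ
  have hδpos : 0 < δ := by positivity
  -- divisibility for all small s
  have hdvd : ∀ s ∈ Set.Ioo (-δ) δ, (pv bh + C s * pv b') ∣ pv v := by
    intro s hs
    have hsabs : |s| < δ := abs_lt.mpr ⟨hs.1, hs.2⟩
    have hdist1 : dist (bh + s • b') bh < ε := by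
      rw [dist_eq_norm, add_sub_cancel_left, norm_smul, Real.norm_eq_abs]
      calc |s| * ‖b'‖ ≤ |s| * (‖b'‖ + 1) := by
            apply mul_le_mul_of_nonneg_left _ (abs_nonneg s)
            linarith [norm_nonneg b']
        _ < δ * (‖b'‖ + 1) := by
            apply mul_lt_mul_of_pos_right hsabs
            positivity
        _ = ε := by
            rw [hδ, div_mul_cancel₀]
            positivity
    -- feasibility of (b_s, yh)
    have hfeas_s : A0 *ᵥ (toep (N - q) N q (bh + s • b') *ᵥ yh) = 0 := by
      rw [toep_mulVec_eq_hank, Matrix.mulVec_add, Matrix.mulVec_smul, Matrix.mulVec_add,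
        Matrix.mulVec_smul, ← toep_mulVec_eq_hank N q bh yh, hfeas]
      have : A0 *ᵥ (hank N q yh *ᵥ b') = 0 := by
        rw [Matrix.mulVec_mulVec]
        exact hMb'
      rw [this]
      simp
    have hbse : (bh + s • b') ⬝ᵥ e = 1 := by
      rw [add_dotProduct, smul_dotProduct, hbe, hb'e0]
      simp
    -- orthogonality
    have horth : ∀ u : Fin N → ℝ,
        (A0 * toep (N - q) N q (bh + s • b')) *ᵥ u = 0 → v ⬝ᵥ u = 0 := by
      intro u hu
      set τ : ℝ := ε / (‖u‖ + 1) with hτdef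
      have hτpos : 0 < τ := by positivity
      apply quad_zero (v ⬝ᵥ u) (u ⬝ᵥ u) τ hτpos
      · apply Finset.sum_nonneg
        intro i _
        exact mul_self_nonneg _
      intro t htabs
      have hdist2 : dist (yh + t • u) yh < ε := by
        rw [dist_eq_norm, add_sub_cancel_left, norm_smul, Real.norm_eq_abs]
        calc |t| * ‖u‖ ≤ |t| * (‖u‖ + 1) := by
              apply mul_le_mul_of_nonneg_left _ (abs_nonneg t)
              linarith [norm_nonneg u]
          _ < τ * (‖u‖ + 1) := by
              apply mul_lt_mul_of_pos_right htabs
              positivity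
          _ = ε := by
              rw [hτdef, div_mul_cancel₀]
              positivity
      have hmemS : (bh + s • b', yh + t • u) ∈ S := by
        rw [hS]
        refine ⟨?_, hbse⟩
        show A0 *ᵥ (toep (N - q) N q (bh + s • b') *ᵥ (yh + t • u)) = 0
        rw [Matrix.mulVec_add, Matrix.mulVec_smul, Matrix.mulVec_add, Matrix.mulVec_smul,
          hfeas_s]
        have : A0 *ᵥ (toep (N - q) N q (bh + s • b') *ᵥ u) = 0 := by
          rw [Matrix.mulVec_mulVec]
          exact hu
        rw [this]
        simp
      have hball' : ((bh + s • b', yh + t • u) : (Fin (q + 1) → ℝ) × (Fin N → ℝ))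
          ∈ Metric.ball (bh, yh) ε ∩ S := by
        constructor
        · rw [Metric.mem_ball, Prod.dist_eq]
          exact max_lt hdist1 hdist2
        · exact hmemS
      have hineq := hball hball'
      simp only [Set.mem_setOf_eq] at hineq
      have hlhs : (∑ i, (y i - yh i) ^ 2) ≤ ∑ i, (y i - (yh i + t * u i)) ^ 2 := by
        convert hineq using 2
        all_goals rfl
      have hexp : ∑ i, (y i - (yh i + t * u i)) ^ 2
          = (∑ i, (v i) ^ 2) + (-(2 * t * (v ⬝ᵥ u)) + t ^ 2 * (u ⬝ᵥ u)) := by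
        rw [← sum_sq_expand v u t]
        refine Finset.sum_congr rfl fun i _ => ?_
        simp only [hv]
        ring
      have hveq : (∑ i, (y i - yh i) ^ 2) = ∑ i, (v i) ^ 2 := by
        refine Finset.sum_congr rfl fun i _ => ?_
        simp [hv]
      rw [hexp, hveq] at hlhs
      linarith
    -- membership in the row space and divisibility
    obtain ⟨μ, hμ⟩ := mem_range_of_orth (A0 * toep (N - q) N q (bh + s • b')) v horth
    rw [Matrix.transpose_mul, ← Matrix.mulVec_mulVec] at hμ
    have h1 : pv v = pv (bh + s • b') * pv ((A0)ᵀ *ᵥ μ) := by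
      rw [← hμ, pv_mul_toepT (N - q) q N (by omega)]
    have h2 : pv ((A0)ᵀ *ᵥ μ) = pv c * pv μ := by
      rw [hA0, pv_mul_toepT (N - (m + q)) m (N - q) (by omega)]
    rw [pv_add_smul] at h1
    exact ⟨pv ((A0)ᵀ *ᵥ μ), h1⟩
  -- the polynomial contradiction
  have hpvv : pv v ≠ 0 := fun h => hv0 ((pv_eq_zero_iff v).mp h)
  have hpvb' : pv b' ≠ 0 := fun h => hb'0 ((pv_eq_zero_iff b').mp h)
  obtain ⟨r, hr⟩ := poly_endgame (pv bh) (pv b') (pv v) hpvv hpvb'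
    (Set.Ioo (-δ) δ) (Set.Ioo_infinite (by linarith)) hdvd
  -- hence bh = r • b', contradicting the normalizations
  have hbh : bh = r • b' := by
    funext i
    have := congrArg (fun p => Polynomial.coeff p (i : ℕ)) hr
    simp only [pv_coeff, coeff_C_mul, i.isLt, dif_pos] at this
    simpa [Pi.smul_apply, smul_eq_mul] using this
  rw [hbh, smul_dotProduct, hb'e0] at hbe
  simp at hbe
end

section
/- Let m ≥ 1, n ≥ m and N > n. Let μ_1, …, μ_n ∈ ℂ and let c ∈ ℂ^{m+1} be the coefficient vector of the monic polynomial c(z) = ∏_{i=1}^m (z − μ_i). For any x_1, …, x_n ∈ ℂ, the vector ŷ = Σ_{i=1}^n x_i v_N(μ_i) ∈ ℂ^N satisfies T_{N−m}(c) ŷ = Σ_{i=m+1}^n x_i c(μ_i) v_{N−m}(μ_i). In particular, prefiltering by T_{N−m}(c) annihilates the components associated with the fixed poles μ_1, …, μ_m, so that the filtered model-compliant data are determined solely by the remaining poles μ_{m+1}, …, μ_n. -/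
open Matrix

/-! Row `t` of `T_{N-m}(c)` carries `c` in the columns `t, …, t + m`, so it maps the Vandermonde
vector `v_N(z)` to `z ^ t * c(z)`; that is, `T_{N-m}(c) v_N(z) = c(z) v_{N-m}(z)`. By linearity the
filtered data is `∑ x_i c(μ_i) v_{N-m}(μ_i)`, and `c(μ_i) = 0` for the roots `μ_1, …, μ_m` of `c`. -/

theorem toep_mulVec_pow {R : Type*} [CommSemiring R] (m N : ℕ) (c : Fin (m + 1) → R) (z : R) :
    toep (N - m) N m c *ᵥ (fun j : Fin N => z ^ (j : ℕ)) =
      (∑ s : Fin (m + 1), c s * z ^ (s : ℕ)) • fun t : Fin (N - m) => z ^ (t : ℕ) := by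
  funext t
  have ht : (t : ℕ) + m < N := by omega
  simp only [mulVec, dotProduct, toep, Matrix.of_apply, Pi.smul_apply, smul_eq_mul,
    Finset.sum_mul]
  symm
  refine Finset.sum_of_injOn (fun s => (⟨t + s, by omega⟩ : Fin N)) ?_ ?_ ?_ ?_
  · intro a _ b _ hab
    exact Fin.ext (by simpa using congrArg Fin.val hab)
  · exact fun _ _ => by simp
  · intro j _ hj
    rw [dif_neg, zero_mul]
    rintro ⟨htj, hjm⟩
    exact hj ⟨⟨j - t, by omega⟩, Finset.mem_coe.mpr (Finset.mem_univ _), Fin.ext (by simp; omega)⟩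
  · intro s _
    simp only [Nat.add_sub_cancel_left, le_add_iff_nonneg_right, zero_le, true_and,
      s.is_le, dite_true, pow_add]
    ring

theorem Polynomial.sum_fin_coeff_mul_pow_eq_eval {R : Type*} [Semiring R] {p : Polynomial R}
    {m : ℕ} (hp : p.natDegree ≤ m) (z : R) :
    ∑ j : Fin (m + 1), p.coeff j * z ^ (j : ℕ) = p.eval z := by
  rw [Fin.sum_univ_eq_sum_range (fun j => p.coeff j * z ^ j),
    ← Polynomial.eval_eq_sum_range' (Nat.lt_succ_of_le hp)]

theorem Polynomial.eval_prod_X_sub_C_of_mem {R ι : Type*} [CommRing R] {s : Finset ι}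
    (f : ι → R) {a : ι} (ha : a ∈ s) :
    (∏ i ∈ s, (Polynomial.X - Polynomial.C (f i))).eval (f a) = 0 := by
  rw [Polynomial.eval_prod]
  exact Finset.prod_eq_zero ha (by simp)

theorem stmt14_general (m n N : ℕ) (hmn : m ≤ n)
    (μ : Fin n → ℂ) (c : Fin (m + 1) → ℂ)
    (hc : ∀ j : Fin (m + 1),
      c j = (∏ i : Fin m,
        (Polynomial.X - Polynomial.C (μ ⟨i, lt_of_lt_of_le i.isLt hmn⟩))).coeff (j : ℕ))
    (x : Fin n → ℂ) :
    toep (N - m) N m c *ᵥ (∑ i, x i • (fun t : Fin N => (μ i) ^ (t : ℕ))) =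
      ∑ i : Fin n,
        (if m ≤ (i : ℕ) then x i * (∑ j : Fin (m + 1), c j * (μ i) ^ (j : ℕ)) else 0) •
          (fun t : Fin (N - m) => (μ i) ^ (t : ℕ)) := by
  set P := ∏ i : Fin m, (Polynomial.X - Polynomial.C (μ ⟨i, lt_of_lt_of_le i.isLt hmn⟩))
  have hcP : ∀ z, ∑ j : Fin (m + 1), c j * z ^ (j : ℕ) = P.eval z := fun z => by
    simp only [hc]
    exact Polynomial.sum_fin_coeff_mul_pow_eq_eval (by simp [P]) z
  rw [mulVec_sum]
  refine Finset.sum_congr rfl fun i _ => ?_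
  rw [mulVec_smul, toep_mulVec_pow, smul_smul]
  split_ifs with hi
  · rfl
  · have hPi : P.eval (μ i) = 0 :=
      Polynomial.eval_prod_X_sub_C_of_mem (fun k : Fin m => μ ⟨k, lt_of_lt_of_le k.isLt hmn⟩)
        (Finset.mem_univ ⟨i, by omega⟩)
    rw [hcP, hPi, mul_zero, zero_smul]

/-- Prefiltering by `T_{N-m}(c)`, where `c` is the coefficient vector of the monic
polynomial `c(z) = ∏_{i=1}^m (z - μ_i)` (entry `j` of `c` being the coefficient of
`z^j`), annihilates the components associated with the fixed poles `μ_1, …, μ_m`: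
`T_{N-m}(c) (∑_{i=1}^n x_i v_N(μ_i)) = ∑_{i=m+1}^n x_i c(μ_i) v_{N-m}(μ_i)`, so the
filtered data are determined solely by the remaining poles. -/
theorem stmt14 (m n N : ℕ) (hm : 1 ≤ m) (hmn : m ≤ n) (hN : n < N)
    (μ : Fin n → ℂ) (c : Fin (m + 1) → ℂ)
    (hc : ∀ j : Fin (m + 1),
      c j = (∏ i : Fin m,
        (Polynomial.X - Polynomial.C (μ ⟨i, lt_of_lt_of_le i.isLt hmn⟩))).coeff (j : ℕ))
    (x : Fin n → ℂ) :
    toep (N - m) N m c *ᵥ (∑ i, x i • (fun t : Fin N => (μ i) ^ (t : ℕ))) =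
      ∑ i : Fin n,
        (if m ≤ (i : ℕ) then x i * (∑ j : Fin (m + 1), c j * (μ i) ^ (j : ℕ)) else 0) •
          (fun t : Fin (N - m) => (μ i) ^ (t : ℕ)) :=
  stmt14_general m n N hmn μ c hc x
end
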